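/- arXiv:2604.13738 — 4 statements merged into one kernel-verified Lean document; each statement's English description precedes it below -/
import Mathlib

section
/- Let X be a random vector in ℝⁿ with mean μ* and covariance matrix Σ*, with ‖X‖_∞ ≤ κ almost surely. Then for every λ ∈ ℝⁿ with ‖λ‖₁ ≤ 1/(2κ), one has E[exp(λᵀ(X − μ*))] ≤ exp(λᵀΣ*λ). (In fact the sharper bound exp((e−2)·λᵀΣ*λ) holds.) -/
open MeasureTheory Real Finset

lemma exp_tsum' (x : ℝ) : Real.exp x = ∑' n : ℕ, x ^ n / n.factorial := by
  rw [Real.exp_eq_exp_ℝ, NormedSpace.exp_eq_tsum ℝ]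
  simp [div_eq_inv_mul, smul_eq_mul]

lemma exp_split (x : ℝ) :
    Real.exp x = 1 + x + ∑' n : ℕ, x ^ (n + 2) / (n + 2).factorial := by
  have hs := Real.summable_pow_div_factorial x
  have hs1 : Summable fun n : ℕ => x ^ (n + 1) / (n + 1).factorial :=
    (summable_nat_add_iff 1).2 hs
  rw [exp_tsum', Summable.tsum_eq_zero_add hs, Summable.tsum_eq_zero_add hs1]
  simp [add_assoc]

lemma tail_eq : ∑' n : ℕ, (1 : ℝ) ^ (n + 2) / (n + 2).factorial = Real.exp 1 - 2 := by
  have := exp_split 1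
  linarith

lemma exp_quad {z : ℝ} (hz : |z| ≤ 1) :
    Real.exp z ≤ 1 + z + (Real.exp 1 - 2) * z ^ 2 := by
  have hs : Summable fun n : ℕ => z ^ (n + 2) / (n + 2).factorial :=
    (summable_nat_add_iff 2).2 (Real.summable_pow_div_factorial z)
  have hs1 : Summable fun n : ℕ => z ^ 2 * ((1:ℝ) ^ (n + 2) / (n + 2).factorial) :=
    ((summable_nat_add_iff 2).2 (Real.summable_pow_div_factorial 1)).mul_left _
  have hle : ∀ n : ℕ, z ^ (n + 2) / (n + 2).factorial
      ≤ z ^ 2 * ((1:ℝ) ^ (n + 2) / (n + 2).factorial) := by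
    intro n
    rw [one_pow, mul_div_assoc', mul_one]
    apply div_le_div_of_nonneg_right ?_ (by positivity)
    calc z ^ (n + 2) ≤ |z ^ (n + 2)| := le_abs_self _
      _ = |z| ^ n * |z| ^ 2 := by rw [abs_pow, pow_add]
      _ ≤ 1 * |z| ^ 2 := by
          apply mul_le_mul_of_nonneg_right (pow_le_one₀ (abs_nonneg z) hz) (by positivity)
      _ = z ^ 2 := by rw [one_mul, sq_abs]
  calc Real.exp z = 1 + z + ∑' n : ℕ, z ^ (n + 2) / (n + 2).factorial := exp_split z
    _ ≤ 1 + z + ∑' n : ℕ, z ^ 2 * ((1:ℝ) ^ (n + 2) / (n + 2).factorial) := by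
        gcongr 1 + z + ?_; exact Summable.tsum_le_tsum hle hs hs1
    _ = 1 + z + (Real.exp 1 - 2) * z ^ 2 := by rw [tsum_mul_left, tail_eq]; ring

/-- Bounded outcomes satisfy the `‖·‖₁`-sub-exponential property with respect to the
covariance matrix: for `‖λ‖₁ ≤ 1/(2κ)`,
`E[exp(λᵀ(X − μ*))] ≤ exp((e−2)·λᵀΣ*λ) ≤ exp(λᵀΣ*λ)`. -/
theorem bounded_subExponential_covariance
    {Ω : Type*} [MeasurableSpace Ω] (P : Measure Ω) [IsProbabilityMeasure P]
    {n : ℕ} (X : Ω → Fin n → ℝ) (μstar : Fin n → ℝ) (κ : ℝ) (hκ : 0 < κ)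
    (hmeas : ∀ i, Measurable fun ω => X ω i)
    (hmean : ∀ i, ∫ ω, X ω i ∂P = μstar i)
    (hbound : ∀ᵐ ω ∂P, ∀ i, |X ω i| ≤ κ) :
    ∀ l : Fin n → ℝ, (∑ i, |l i|) ≤ 1 / (2 * κ) →
      ∫ ω, Real.exp (∑ i, l i * (X ω i - μstar i)) ∂P
        ≤ Real.exp ((Real.exp 1 - 2) *
            ∑ i, ∑ j, l i * (∫ ω, (X ω i - μstar i) * (X ω j - μstar j) ∂P) * l j) ∧
      ∫ ω, Real.exp (∑ i, l i * (X ω i - μstar i)) ∂P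
        ≤ Real.exp
            (∑ i, ∑ j, l i * (∫ ω, (X ω i - μstar i) * (X ω j - μstar j) ∂P) * l j) := by
  intro l hl
  set Z : Ω → ℝ := fun ω => ∑ i, l i * (X ω i - μstar i) with hZ
  have hZmeas : Measurable Z := by
    apply Finset.measurable_sum
    intro i _
    exact (measurable_const.mul ((hmeas i).sub measurable_const))
  -- bound on the means
  have hμ : ∀ i, |μstar i| ≤ κ := by
    intro i
    rw [← hmean i]
    have h := norm_integral_le_of_norm_le_const (μ := P) (f := fun ω => X ω i) (C := κ)
      (hbound.mono fun ω h => by simpa [Real.norm_eq_abs] using h i)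
    simpa [Real.norm_eq_abs] using h
  -- a.e. bound on Y
  have hY : ∀ᵐ ω ∂P, ∀ i, |X ω i - μstar i| ≤ 2 * κ := by
    filter_upwards [hbound] with ω hω i
    have := hω i
    have := hμ i
    have h1 := abs_sub (X ω i) (μstar i)
    calc |X ω i - μstar i| ≤ |X ω i| + |μstar i| := abs_sub _ _
      _ ≤ 2 * κ := by linarith
  -- a.e. bound on Z
  have hZbdd : ∀ᵐ ω ∂P, |Z ω| ≤ 1 := by
    filter_upwards [hY] with ω hω
    calc |Z ω| ≤ ∑ i, |l i * (X ω i - μstar i)| := Finset.abs_sum_le_sum_abs _ _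
      _ ≤ ∑ i, |l i| * (2 * κ) := by
          apply Finset.sum_le_sum
          intro i _
          rw [abs_mul]
          exact mul_le_mul_of_nonneg_left (hω i) (abs_nonneg _)
      _ = (∑ i, |l i|) * (2 * κ) := by rw [Finset.sum_mul]
      _ ≤ (1 / (2 * κ)) * (2 * κ) := by
          apply mul_le_mul_of_nonneg_right hl (by positivity)
      _ = 1 := by field_simp
  -- integrability
  have int_of_bdd : ∀ (f : Ω → ℝ) (C : ℝ), Measurable f → (∀ᵐ ω ∂P, |f ω| ≤ C) →
      Integrable f P := fun f C hf h =>
    (integrable_const C).mono' hf.aestronglyMeasurable (by simpa [Real.norm_eq_abs] using h)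
  have intZ : Integrable Z P := int_of_bdd Z 1 hZmeas hZbdd
  have intZ2 : Integrable (fun ω => Z ω ^ 2) P := by
    apply int_of_bdd _ 1 (hZmeas.pow_const 2)
    filter_upwards [hZbdd] with ω hω
    rw [abs_pow]
    exact pow_le_one₀ (abs_nonneg _) hω
  have intExpZ : Integrable (fun ω => Real.exp (Z ω)) P := by
    apply int_of_bdd _ (Real.exp 1) hZmeas.exp
    filter_upwards [hZbdd] with ω hω
    rw [abs_of_pos (Real.exp_pos _)]
    exact Real.exp_le_exp.2 ((le_abs_self _).trans hω)
  have intY : ∀ i, Integrable (fun ω => X ω i - μstar i) P := by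
    intro i
    apply int_of_bdd _ (2 * κ) ((hmeas i).sub measurable_const)
    filter_upwards [hY] with ω hω using hω i
  have intYY : ∀ i j, Integrable (fun ω => (X ω i - μstar i) * (X ω j - μstar j)) P := by
    intro i j
    apply int_of_bdd _ ((2 * κ) * (2 * κ))
      (((hmeas i).sub measurable_const).mul ((hmeas j).sub measurable_const))
    filter_upwards [hY] with ω hω
    simp only [Pi.mul_apply, Pi.sub_apply]
    rw [abs_mul]
    exact mul_le_mul (hω i) (hω j) (abs_nonneg _) (by positivity)
  -- mean of Z is zero
  have hEY : ∀ i, ∫ ω, (X ω i - μstar i) ∂P = 0 := by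
    intro i
    rw [integral_sub (int_of_bdd _ κ (hmeas i)
      (hbound.mono fun ω h => h i)) (integrable_const _), hmean i]
    simp
  have hEZ : ∫ ω, Z ω ∂P = 0 := by
    rw [hZ]
    rw [integral_finset_sum _ (fun i _ => (intY i).const_mul (l i))]
    apply Finset.sum_eq_zero
    intro i _
    rw [integral_const_mul, hEY i, mul_zero]
  -- second moment of Z
  set S : ℝ := ∑ i, ∑ j, l i * (∫ ω, (X ω i - μstar i) * (X ω j - μstar j) ∂P) * l j with hS
  have hEZ2 : ∫ ω, Z ω ^ 2 ∂P = S := by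
    have hsq : ∀ ω, Z ω ^ 2 = ∑ i, ∑ j,
        (l i * l j) * ((X ω i - μstar i) * (X ω j - μstar j)) := by
      intro ω
      rw [sq, hZ, Finset.sum_mul_sum]
      apply Finset.sum_congr rfl
      intro i _
      apply Finset.sum_congr rfl
      intro j _
      ring
    simp only [hsq]
    rw [integral_finset_sum _ (fun i _ => by
      exact integrable_finset_sum _ (fun j _ => ((intYY i j).const_mul _)))]
    rw [hS]
    apply Finset.sum_congr rfl
    intro i _
    rw [integral_finset_sum _ (fun j _ => ((intYY i j).const_mul _))]
    apply Finset.sum_congr rfl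
    intro j _
    rw [integral_const_mul]
    ring
  have hSnonneg : 0 ≤ S := by
    rw [← hEZ2]
    exact integral_nonneg fun ω => sq_nonneg _
  -- main bound
  have h1 : ∫ ω, Real.exp (Z ω) ∂P ≤ Real.exp ((Real.exp 1 - 2) * S) := by
    calc ∫ ω, Real.exp (Z ω) ∂P
        ≤ ∫ ω, (1 + Z ω + (Real.exp 1 - 2) * Z ω ^ 2) ∂P := by
          apply integral_mono_ae intExpZ
            (((integrable_const 1).add intZ).add (intZ2.const_mul _))
          filter_upwards [hZbdd] with ω hω using exp_quad hω
      _ = 1 + (Real.exp 1 - 2) * S := by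
          have e1 : Integrable (fun ω => 1 + Z ω) P := (integrable_const 1).add intZ
          have e2 : Integrable (fun ω => (Real.exp 1 - 2) * Z ω ^ 2) P := intZ2.const_mul _
          rw [integral_add e1 e2, integral_add (integrable_const 1) intZ,
            integral_const_mul, hEZ, hEZ2]
          simp
      _ ≤ Real.exp ((Real.exp 1 - 2) * S) := by
          have := Real.add_one_le_exp ((Real.exp 1 - 2) * S)
          linarith
  refine ⟨h1, h1.trans (Real.exp_le_exp.2 ?_)⟩
  have he : Real.exp 1 - 2 ≤ 1 := by
    have := Real.exp_one_lt_d9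
    linarith
  nlinarith
end

section
/- Let C be a symmetric positive semi-definite n×n matrix, κ > 0, and let Γ be the n×n matrix with all entries equal to κ². Then the following are equivalent: (a) C_{ii} ≤ κ² for all i ∈ [n]; (b) λᵀ(Γ − C)λ ≥ 0 for all λ ∈ ℝⁿ with nonnegative entries. -/
open Finset
open Finset

lemma qform_sum {n : ℕ} (C : Matrix (Fin n) (Fin n) ℝ) (v : Fin n → ℝ) :
    dotProduct (star v) (C.mulVec v) = ∑ i, ∑ j, v i * C i j * v j := by
  simp [dotProduct, Matrix.mulVec, Finset.mul_sum, mul_assoc, mul_comm, mul_left_comm]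

lemma key {n : ℕ} (C : Matrix (Fin n) (Fin n) ℝ) (hC : C.PosSemidef) (i j : Fin n) :
    C i j ≤ (C i i + C j j) / 2 := by
  rcases eq_or_ne i j with rfl | hij
  · linarith
  · have h := hC.dotProduct_mulVec_nonneg (Pi.single i 1 - Pi.single j 1)
    rw [qform_sum] at h
    have hsym : C j i = C i j := by
      have := hC.1; have := congrFun (congrFun this.symm j) i
      simpa using this
    have hexp : ∑ a, ∑ b, ((Pi.single i 1 - Pi.single j 1 : Fin n → ℝ) a) * C a b * ((Pi.single i 1 - Pi.single j 1 : Fin n → ℝ) b) = C i i - C i j - C j i + C j j := by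
      simp only [Pi.sub_apply, sub_mul, mul_sub]
      simp [Finset.sum_sub_distrib, Pi.single_apply, Finset.mul_sum, Finset.sum_ite_eq,
        Finset.sum_ite_eq', hij, hij.symm]
      ring
    rw [hexp] at h
    linarith

/-- For a PSD matrix `C` and `Γ` the constant matrix with entries `κ²`:
`C_{ii} ≤ κ²` for all `i`  ↔  `λᵀ(Γ − C)λ ≥ 0` for all entrywise-nonnegative `λ`. -/
theorem diag_le_iff_posOrthant_order
    {n : ℕ} (C : Matrix (Fin n) (Fin n) ℝ) (hC : C.PosSemidef) (κ : ℝ) (hκ : 0 < κ) :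
    (∀ i, C i i ≤ κ ^ 2) ↔
      (∀ l : Fin n → ℝ, (∀ i, 0 ≤ l i) →
        0 ≤ ∑ i, ∑ j, l i * (κ ^ 2 - C i j) * l j) := by
  constructor
  · intro hdiag l hl
    refine Finset.sum_nonneg fun i _ => Finset.sum_nonneg fun j _ => ?_
    have h1 : C i j ≤ κ ^ 2 := by
      have := key C hC i j
      have := hdiag i; have := hdiag j
      linarith
    have : 0 ≤ κ ^ 2 - C i j := by linarith
    exact mul_nonneg (mul_nonneg (hl i) this) (hl j)
  · intro h i
    have := h (Pi.single i 1) (fun k => by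
      rcases eq_or_ne k i with rfl | hk
      · simp
      · simp [Pi.single_apply, hk])
    have hexp : ∑ a, ∑ b, (Pi.single i 1 : Fin n → ℝ) a * (κ ^ 2 - C a b) *
        (Pi.single i 1 : Fin n → ℝ) b = κ ^ 2 - C i i := by
      simp [Pi.single_apply, Finset.sum_ite_eq, Finset.mul_sum]
    rw [hexp] at this
    linarith
end

section
/- Sparse covariance bound: let X be a random vector in ℝⁿ with mean μ*, covariance Σ*, such that ‖X‖_∞ ≤ 1 and ‖X‖₁ ≤ s almost surely. Then for every index i ∈ [n] and every subset A ⊆ [n] with |A| = m, Σ_{j∈A} max(0, Σ*_{ij}) ≤ 2·E[|X_i|]·min(s, m). -/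
open MeasureTheory Finset

/-- Sparse covariance bound: if `‖X‖_∞ ≤ 1` and `‖X‖₁ ≤ s` a.s., then for every arm `i`
and every action `A` of cardinality `m`,
`Σ_{j∈A} max(0, Σ*_{ij}) ≤ 2·E[|X_i|]·min(s, m)`. -/
theorem sparse_covariance_bound
    {Ω : Type*} [MeasurableSpace Ω] (P : Measure Ω) [IsProbabilityMeasure P]
    {n : ℕ} (X : Ω → Fin n → ℝ) (μstar : Fin n → ℝ) (s : ℝ) (hs : 0 < s)
    (hmeas : ∀ i, Measurable fun ω => X ω i)
    (hmean : ∀ i, ∫ ω, X ω i ∂P = μstar i)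
    (hinf : ∀ᵐ ω ∂P, ∀ i, |X ω i| ≤ 1)
    (hl1 : ∀ᵐ ω ∂P, ∑ i, |X ω i| ≤ s)
    (i : Fin n) (A : Finset (Fin n)) (m : ℕ) (hm : A.card = m) :
    ∑ j ∈ A, max 0 ((∫ ω, X ω i * X ω j ∂P) - μstar i * μstar j)
      ≤ 2 * (∫ ω, |X ω i| ∂P) * min s (m : ℝ) := by
  -- generic integrability helper
  have hint : ∀ (f : Ω → ℝ) (C : ℝ), Measurable f → (∀ᵐ ω ∂P, |f ω| ≤ C) →
      Integrable f P := by
    intro f C hf hb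
    exact (integrable_const C).mono' hf.aestronglyMeasurable
      (by filter_upwards [hb] with ω h; simpa [Real.norm_eq_abs] using h)
  have intAbs : ∀ j, Integrable (fun ω => |X ω j|) P := fun j =>
    hint _ 1 (hmeas j).abs (by filter_upwards [hinf] with ω h; simpa using h j)
  have intProd : ∀ j, Integrable (fun ω => X ω i * X ω j) P := fun j =>
    hint _ 1 ((hmeas i).mul (hmeas j))
      (by filter_upwards [hinf] with ω h
          rw [abs_mul]
          exact mul_le_one₀ (h i) (abs_nonneg _) (h j))
  have intAbsProd : ∀ j, Integrable (fun ω => |X ω i| * |X ω j|) P := fun j =>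
    hint _ 1 ((hmeas i).abs.mul (hmeas j).abs)
      (by filter_upwards [hinf] with ω h
          rw [abs_mul, abs_abs, abs_abs]
          exact mul_le_one₀ (h i) (abs_nonneg _) (h j))
  -- a.e. bound on the sparse sum
  have hsum : ∀ᵐ ω ∂P, ∑ j ∈ A, |X ω j| ≤ min s (m : ℝ) := by
    filter_upwards [hinf, hl1] with ω h1 h2
    refine le_min (le_trans ?_ h2) ?_
    · exact Finset.sum_le_sum_of_subset_of_nonneg (Finset.subset_univ A)
        (fun j _ _ => abs_nonneg _)
    · calc ∑ j ∈ A, |X ω j| ≤ ∑ j ∈ A, 1 := Finset.sum_le_sum (fun j _ => h1 j)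
        _ = (m : ℝ) := by simp [hm]
  have μabs_nonneg : 0 ≤ ∫ ω, |X ω i| ∂P :=
    integral_nonneg fun ω => abs_nonneg _
  -- per-index bound
  have hj : ∀ j ∈ A, max 0 ((∫ ω, X ω i * X ω j ∂P) - μstar i * μstar j)
      ≤ (∫ ω, |X ω i| * |X ω j| ∂P) + (∫ ω, |X ω i| ∂P) * (∫ ω, |X ω j| ∂P) := by
    intro j _
    have h1 : (∫ ω, X ω i * X ω j ∂P) ≤ ∫ ω, |X ω i| * |X ω j| ∂P := by
      refine integral_mono (intProd j) (intAbsProd j) fun ω => ?_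
      rw [← abs_mul]; exact le_abs_self _
    have h2 : -(μstar i * μstar j) ≤ (∫ ω, |X ω i| ∂P) * (∫ ω, |X ω j| ∂P) := by
      have hμ : ∀ k, |μstar k| ≤ ∫ ω, |X ω k| ∂P := fun k => by
        rw [← hmean k]
        simpa [Real.norm_eq_abs] using norm_integral_le_integral_norm (μ := P) (fun ω => X ω k)
      calc -(μstar i * μstar j) ≤ |μstar i * μstar j| := neg_le_abs _
        _ = |μstar i| * |μstar j| := abs_mul _ _
        _ ≤ (∫ ω, |X ω i| ∂P) * (∫ ω, |X ω j| ∂P) :=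
            mul_le_mul (hμ i) (hμ j) (abs_nonneg _) μabs_nonneg
    refine max_le ?_ ?_
    · exact add_nonneg (integral_nonneg fun ω => mul_nonneg (abs_nonneg _) (abs_nonneg _))
        (mul_nonneg μabs_nonneg (integral_nonneg fun ω => abs_nonneg _))
    · have := add_le_add h1 h2
      linarith
  -- sum the bounds
  have key1 : ∑ j ∈ A, (∫ ω, |X ω i| * |X ω j| ∂P)
      ≤ (∫ ω, |X ω i| ∂P) * min s (m : ℝ) := by
    rw [← integral_finset_sum A (fun j _ => intAbsProd j)]
    have heq : ∀ ω, ∑ j ∈ A, |X ω i| * |X ω j| = |X ω i| * ∑ j ∈ A, |X ω j| := fun ω =>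
      (Finset.mul_sum _ _ _).symm
    calc (∫ ω, ∑ j ∈ A, |X ω i| * |X ω j| ∂P)
        ≤ ∫ ω, |X ω i| * min s (m : ℝ) ∂P := by
          refine integral_mono_ae (by
            refine integrable_finset_sum A fun j _ => intAbsProd j)
            ((intAbs i).mul_const _) ?_
          filter_upwards [hsum] with ω hω
          rw [heq ω]
          exact mul_le_mul_of_nonneg_left hω (abs_nonneg _)
      _ = (∫ ω, |X ω i| ∂P) * min s (m : ℝ) := integral_mul_const _ _
  have key2 : ∑ j ∈ A, (∫ ω, |X ω j| ∂P) ≤ min s (m : ℝ) := by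
    rw [← integral_finset_sum A (fun j _ => intAbs j)]
    calc (∫ ω, ∑ j ∈ A, |X ω j| ∂P) ≤ ∫ ω, min s (m : ℝ) ∂P :=
        integral_mono_ae (integrable_finset_sum A fun j _ => intAbs j)
          (integrable_const _) hsum
      _ = min s (m : ℝ) := by simp
  calc ∑ j ∈ A, max 0 ((∫ ω, X ω i * X ω j ∂P) - μstar i * μstar j)
      ≤ ∑ j ∈ A, ((∫ ω, |X ω i| * |X ω j| ∂P)
          + (∫ ω, |X ω i| ∂P) * (∫ ω, |X ω j| ∂P)) := Finset.sum_le_sum hj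
    _ = (∑ j ∈ A, (∫ ω, |X ω i| * |X ω j| ∂P))
          + (∫ ω, |X ω i| ∂P) * ∑ j ∈ A, (∫ ω, |X ω j| ∂P) := by
        rw [Finset.sum_add_distrib, Finset.mul_sum]
    _ ≤ (∫ ω, |X ω i| ∂P) * min s (m : ℝ)
          + (∫ ω, |X ω i| ∂P) * min s (m : ℝ) := by
        gcongr

    _ = 2 * (∫ ω, |X ω i| ∂P) * min s (m : ℝ) := by ring
end

section
/- Abel summation / Riemann sum bound: let f : ℝ₊ → ℝ₊ be non-increasing, let Δ₁ ≥ Δ₂ ≥ … ≥ Δ_K > 0 be reals, and set f(Δ₀) := 0. Then Σ_{k=1}^{K} (⌊f(Δ_k)⌋ − ⌊f(Δ_{k−1})⌋)·Δ_k ≤ f(Δ_K)·Δ_K + ∫_{Δ_K}^{Δ₁} f(x) dx. -/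
open Finset intervalIntegral

lemma abel_riemann_aux (f : ℝ → ℝ) (Δ : ℕ → ℝ)
    (hf_nonneg : ∀ x, 0 < x → 0 ≤ f x)
    (hf_anti : AntitoneOn f (Set.Ioi (0 : ℝ))) :
    ∀ K, 1 ≤ K → 0 < Δ K → (∀ k l, 1 ≤ k → k ≤ l → l ≤ K → Δ l ≤ Δ k) →
    IntervalIntegrable f MeasureTheory.volume (Δ K) (Δ 1) →
    ∑ k ∈ Finset.Icc 1 K,
        ((⌊f (Δ k)⌋ : ℝ) - (if k = 1 then 0 else (⌊f (Δ (k - 1))⌋ : ℝ))) * Δ k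
      ≤ (⌊f (Δ K)⌋ : ℝ) * Δ K + ∫ x in Δ K..Δ 1, f x := by
  intro K hK
  induction K, hK using Nat.le_induction with
  | base =>
    intro hpos hanti hint
    simp [intervalIntegral.integral_same]
  | succ K hK ih =>
    intro hpos hanti hint
    have hK1 : (1:ℕ) ≤ K + 1 := by omega
    have hle1 : Δ (K+1) ≤ Δ K := hanti K (K+1) hK (by omega) le_rfl
    have hKpos : 0 < Δ K := lt_of_lt_of_le hpos hle1
    have hleK1 : Δ K ≤ Δ 1 := hanti 1 K le_rfl hK (by omega)
    have hanti' : ∀ k l, 1 ≤ k → k ≤ l → l ≤ K → Δ l ≤ Δ k :=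
      fun k l h1 h2 h3 => hanti k l h1 h2 (by omega)
    have hsub1 : Set.uIcc (Δ (K+1)) (Δ K) ⊆ Set.uIcc (Δ (K+1)) (Δ 1) := by
      rw [Set.uIcc_of_le hle1, Set.uIcc_of_le (hle1.trans hleK1)]
      exact Set.Icc_subset_Icc le_rfl hleK1
    have hsub2 : Set.uIcc (Δ K) (Δ 1) ⊆ Set.uIcc (Δ (K+1)) (Δ 1) := by
      rw [Set.uIcc_of_le hleK1, Set.uIcc_of_le (hle1.trans hleK1)]
      exact Set.Icc_subset_Icc hle1 le_rfl
    have hint1 : IntervalIntegrable f MeasureTheory.volume (Δ (K+1)) (Δ K) :=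
      hint.mono_set hsub1
    have hint2 : IntervalIntegrable f MeasureTheory.volume (Δ K) (Δ 1) :=
      hint.mono_set hsub2
    have hIH := ih hKpos hanti' hint2
    have hsplit : (∫ x in Δ (K+1)..Δ K, f x) + (∫ x in Δ K..Δ 1, f x)
        = ∫ x in Δ (K+1)..Δ 1, f x :=
      intervalIntegral.integral_add_adjacent_intervals hint1 hint2
    -- lower bound on the middle integral
    have hlow : (⌊f (Δ K)⌋ : ℝ) * (Δ K - Δ (K+1)) ≤ ∫ x in Δ (K+1)..Δ K, f x := by
      have hmono : ∀ x ∈ Set.Icc (Δ (K+1)) (Δ K), (⌊f (Δ K)⌋ : ℝ) ≤ f x := by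
        intro x hx
        have hx0 : (0:ℝ) < x := lt_of_lt_of_le hpos hx.1
        have : f (Δ K) ≤ f x := hf_anti hx0 hKpos hx.2
        exact le_trans (Int.floor_le _) this
      have := intervalIntegral.integral_mono_on hle1
        (_root_.intervalIntegrable_const (c := ((⌊f (Δ K)⌋ : ℝ)))) hint1 hmono
      simpa [intervalIntegral.integral_const, smul_eq_mul, mul_comm] using this
    rw [Finset.sum_Icc_succ_top hK1]
    have hne : K + 1 ≠ 1 := by omega
    simp only [hne, if_false, Nat.add_sub_cancel]
    rw [← hsplit]
    nlinarith [hIH]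

/-- Abel-summation / Riemann-sum bound: for a non-increasing nonnegative `f` and a
non-increasing sequence of positive reals `Δ₁ ≥ … ≥ Δ_K > 0` (with the convention
`f(Δ₀) := 0`),
`Σ_{k=1}^K (⌊f(Δ_k)⌋ − ⌊f(Δ_{k−1})⌋)·Δ_k ≤ f(Δ_K)·Δ_K + ∫_{Δ_K}^{Δ₁} f`. -/
theorem abel_riemann_bound (f : ℝ → ℝ) (K : ℕ) (hK : 1 ≤ K) (Δ : ℕ → ℝ)
    (hf_nonneg : ∀ x, 0 < x → 0 ≤ f x)
    (hf_anti : AntitoneOn f (Set.Ioi (0 : ℝ)))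
    (hΔ_pos : 0 < Δ K)
    (hΔ_anti : ∀ k l, 1 ≤ k → k ≤ l → l ≤ K → Δ l ≤ Δ k)
    (hf_int : IntervalIntegrable f MeasureTheory.volume (Δ K) (Δ 1)) :
    ∑ k ∈ Finset.Icc 1 K,
        ((⌊f (Δ k)⌋ : ℝ) - (if k = 1 then 0 else (⌊f (Δ (k - 1))⌋ : ℝ))) * Δ k
      ≤ f (Δ K) * Δ K + ∫ x in Δ K..Δ 1, f x := by
  have h := abel_riemann_aux f Δ hf_nonneg hf_anti K hK hΔ_pos hΔ_anti hf_int
  have hfloor : (⌊f (Δ K)⌋ : ℝ) ≤ f (Δ K) := Int.floor_le _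
  nlinarith [h, hΔ_pos.le]
end
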